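/- arXiv:math/0406210 — 2 statements merged into one kernel-verified Lean document; each statement's English description precedes it below -/
import Mathlib

section
/- Let n, d ∈ ℕ and let r : Fin d → (formal power series in the variables Fin n ⊕ Fin d over ℝ) be such that for each j, every coefficient of r j in total degree ≤ 1 vanishes. Define inductively v_0 = 0 and v_{m+1} j = the substitution of the family (Sum.inl i ↦ X_i, Sum.inr l ↦ v_m l) into r j. Then for every k ∈ ℕ, every multi-index e ∈ ℕ^{Fin n} with |e| ≤ k, every j ∈ Fin d, and every m ≥ k, one has coeff_e (v_m j) = coeff_e (v_k j); i.e., every coefficient of order ≤ k of the iterates is determined after at most k iterations and does not change thereafter. -/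
/-!
Measure agreement of two series up to degree `N` by the order of their difference exceeding `N`.
The families `gₘ = (X, vₘ)` substituted into `r` have no constant terms. If `gₘ - gₖ` has order
`> k` componentwise, then for `|u| ≥ 2` the difference `gₘ^u - gₖ^u` telescopes into products of
one difference factor with `|u| - 1 ≥ 1` factors of positive order, hence has order `> k + 1`.
Since `r` has no terms of degree `≤ 1`, `vₘ₊₁ - vₖ₊₁` then has order `> k + 1`; induct on `k`.
-/

open MvPowerSeries

open Classical in
/-- The finite set of multi-indices on a finite type `σ` of total degree at most `k`. -/
noncomputable def degLE (σ : Type*) [Fintype σ] (k : ℕ) : Finset (σ →₀ ℕ) :=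
  (Finset.Iic (Finsupp.equivFunOnFinite.symm (fun _ : σ => k))).filter
    (fun d => (d.sum fun _ n => n) ≤ k)

/-- Truncation of a multivariate power series to total degree at most `k`,
as a multivariate polynomial. -/
noncomputable def truncTotalDeg {σ : Type*} [Fintype σ] (k : ℕ)
    (f : MvPowerSeries σ ℝ) : MvPolynomial σ ℝ :=
  ∑ d ∈ degLE σ k, MvPolynomial.monomial d (MvPowerSeries.coeff d f)

/-- Substitution of the family `g` (assumed to have zero constant terms) into
the power series `f`: the coefficient at the multi-index `e` only involves
the terms of `f` of total degree at most `|e|`. -/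
noncomputable def psSubst {σ τ : Type*} [Fintype σ]
    (f : MvPowerSeries σ ℝ) (g : σ → MvPowerSeries τ ℝ) : MvPowerSeries τ ℝ :=
  fun e => MvPowerSeries.coeff e
    (MvPolynomial.aeval g (truncTotalDeg (e.sum fun _ n => n) f))

open Finsupp

section Order

variable {σ ι R : Type*} [CommRing R]

theorem prod_map_toMultiset {β : Type*} [CommMonoid β] (u : ι →₀ ℕ) (f : ι → β) :
    (u.toMultiset.map f).prod = u.prod fun i k => f i ^ k := by
  classical
  simp [Finset.prod_multiset_map_count, Finsupp.prod]

theorem card_le_order_prod_map {g : ι → MvPowerSeries σ R} (hg : ∀ i, constantCoeff (g i) = 0)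
    (s : Multiset ι) : (Multiset.card s : ℕ∞) ≤ (s.map g).prod.order := by
  induction s using Multiset.induction with
  | empty => simp
  | cons i s ih =>
    rw [Multiset.map_cons, Multiset.prod_cons, Multiset.card_cons, Nat.cast_succ, add_comm]
    exact (add_le_add (one_le_order_iff_constCoeff_eq_zero.mpr (hg i)) ih).trans le_order_mul

variable {g g' : ι → MvPowerSeries σ R} {M : ℕ∞}

theorem le_order_prod_map_cons_sub (hg : ∀ i, constantCoeff (g i) = 0)
    (hg' : ∀ i, constantCoeff (g' i) = 0) (hM : ∀ i, M ≤ (g i - g' i).order)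
    (s : Multiset ι) (i : ι) :
    M + Multiset.card s ≤ (((i ::ₘ s).map g).prod - ((i ::ₘ s).map g').prod).order := by
  induction s using Multiset.induction generalizing i with
  | empty => simpa using hM i
  | cons j s ih =>
    set P := ((j ::ₘ s).map g).prod
    set P' := ((j ::ₘ s).map g').prod
    have hsplit : ((i ::ₘ j ::ₘ s).map g).prod - ((i ::ₘ j ::ₘ s).map g').prod =
        g i * (P - P') + (g i - g' i) * P' := by
      simp only [Multiset.map_cons, Multiset.prod_cons, P, P']
      ring
    rw [hsplit]
    refine le_trans (le_min ?_ ?_) min_order_le_add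
    · calc M + Multiset.card (j ::ₘ s) = 1 + (M + Multiset.card s) := by
            rw [Multiset.card_cons, Nat.cast_succ]; ring
        _ ≤ (g i).order + (P - P').order :=
            add_le_add (one_le_order_iff_constCoeff_eq_zero.mpr (hg i)) (ih j)
        _ ≤ _ := le_order_mul
    · exact (add_le_add (hM i) (card_le_order_prod_map hg' _)).trans le_order_mul

theorem le_order_aeval_monomial_sub (hg : ∀ i, constantCoeff (g i) = 0)
    (hg' : ∀ i, constantCoeff (g' i) = 0) (hM : ∀ i, M ≤ (g i - g' i).order)
    {u : ι →₀ ℕ} (hu : u ≠ 0) (c : R) :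
    M + (degree u - 1 : ℕ) ≤
      (MvPolynomial.aeval g (MvPolynomial.monomial u c) -
        MvPolynomial.aeval g' (MvPolynomial.monomial u c)).order := by
  obtain ⟨i, hi⟩ := support_nonempty_iff.mpr hu
  rw [← mem_toMultiset] at hi
  obtain ⟨s, hs⟩ := Multiset.exists_cons_of_mem hi
  have hcard : degree u - 1 = Multiset.card s := by
    have := congrArg Multiset.card hs
    rw [card_toMultiset, Multiset.card_cons] at this
    exact Nat.sub_eq_of_eq_add this
  rw [MvPolynomial.aeval_monomial, MvPolynomial.aeval_monomial, ← mul_sub, ← Algebra.smul_def,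
    ← prod_map_toMultiset, ← prod_map_toMultiset, hs, hcard]
  exact (le_order_prod_map_cons_sub hg hg' hM s i).trans le_order_smul

theorem le_order_aeval_sub (hg : ∀ i, constantCoeff (g i) = 0)
    (hg' : ∀ i, constantCoeff (g' i) = 0) (hM : ∀ i, M ≤ (g i - g' i).order)
    {p : MvPolynomial ι R} (hp : ∀ u, degree u ≤ 1 → p.coeff u = 0) :
    M + 1 ≤ (MvPolynomial.aeval g p - MvPolynomial.aeval g' p).order := by
  rw [p.as_sum, map_sum, map_sum, ← Finset.sum_sub_distrib]
  refine Finset.sum_induction _ (fun f : MvPowerSeries σ R => M + 1 ≤ f.order)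
    (fun _ _ ha hb => (le_min ha hb).trans min_order_le_add) (by simp) fun u hu => ?_
  have hdeg : 2 ≤ degree u := by
    by_contra h
    exact MvPolynomial.mem_support_iff.mp hu (hp u (by omega))
  have hu0 : u ≠ 0 := by
    rintro rfl
    simp at hdeg
  calc M + 1 ≤ M + (degree u - 1 : ℕ) := by gcongr; exact_mod_cast (by omega : 1 ≤ degree u - 1)
    _ ≤ _ := le_order_aeval_monomial_sub hg hg' hM hu0 _

end Order

section Substitution

variable {σ τ : Type*} [Fintype σ]

theorem coeff_truncTotalDeg (k : ℕ) (f : MvPowerSeries σ ℝ) (u : σ →₀ ℕ) :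
    (truncTotalDeg k f).coeff u = if degree u ≤ k then coeff u f else 0 := by
  have hmem : u ∈ degLE σ k ↔ degree u ≤ k := by
    simp only [degLE, Finset.mem_filter, Finset.mem_Iic]
    refine ⟨And.right, fun h => ⟨fun i => (le_degree i u).trans h, h⟩⟩
  classical
  simp only [truncTotalDeg, MvPolynomial.coeff_sum, MvPolynomial.coeff_monomial,
    Finset.sum_ite_eq', hmem]

theorem coeff_psSubst (f : MvPowerSeries σ ℝ) (g : σ → MvPowerSeries τ ℝ) (e : τ →₀ ℕ) :
    coeff e (psSubst f g) = coeff e (MvPolynomial.aeval g (truncTotalDeg (degree e) f)) := rfl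

theorem constantCoeff_psSubst (f : MvPowerSeries σ ℝ) (g : σ → MvPowerSeries τ ℝ) :
    constantCoeff (psSubst f g) = constantCoeff f := by
  have htrunc : truncTotalDeg 0 f = MvPolynomial.C (constantCoeff f) := by
    classical
    ext u
    rw [coeff_truncTotalDeg, MvPolynomial.coeff_C]
    rcases eq_or_ne u 0 with rfl | hu
    · simp
    · simp [hu, Ne.symm hu, degree_eq_zero_iff]
  rw [← coeff_zero_eq_constantCoeff_apply, coeff_psSubst, map_zero, htrunc, MvPolynomial.aeval_C,
    MvPowerSeries.algebraMap_apply, Algebra.algebraMap_self, RingHom.id_apply, coeff_zero_C]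

theorem le_order_psSubst_sub {f : MvPowerSeries σ ℝ} (hf : ∀ u, degree u ≤ 1 → coeff u f = 0)
    {g g' : σ → MvPowerSeries τ ℝ} {M : ℕ∞} (hg : ∀ i, constantCoeff (g i) = 0)
    (hg' : ∀ i, constantCoeff (g' i) = 0) (hM : ∀ i, M ≤ (g i - g' i).order) :
    M + 1 ≤ (psSubst f g - psSubst f g').order := by
  refine le_order fun e he => ?_
  rw [map_sub, coeff_psSubst, coeff_psSubst, ← map_sub]
  refine coeff_of_lt_order (he.trans_le (le_order_aeval_sub hg hg' hM fun u hu => ?_))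
  rw [coeff_truncTotalDeg, hf u hu, ite_self]

end Substitution

/-- Stabilization of the iteration `v⁰ = 0`, `vᵐ⁺¹ = r(x, vᵐ)`: every coefficient of
order ≤ k is determined after at most k iterations and does not change thereafter. -/
theorem iteration_stabilizes (n d : ℕ)
    (r : Fin d → MvPowerSeries (Fin n ⊕ Fin d) ℝ)
    (hr : ∀ j, ∀ m : (Fin n ⊕ Fin d) →₀ ℕ, (m.sum fun _ a => a) ≤ 1 →
      MvPowerSeries.coeff m (r j) = 0)
    (v : ℕ → Fin d → MvPowerSeries (Fin n) ℝ)
    (hv0 : ∀ j, v 0 j = 0)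
    (hvs : ∀ m j, v (m + 1) j = psSubst (r j) (Sum.elim (fun i => MvPowerSeries.X i) (v m))) :
    ∀ k : ℕ, ∀ e : Fin n →₀ ℕ, (e.sum fun _ a => a) ≤ k → ∀ j : Fin d, ∀ m : ℕ, k ≤ m →
      MvPowerSeries.coeff e (v m j) = MvPowerSeries.coeff e (v k j) := by
  have hconst : ∀ m j, constantCoeff (v m j) = 0 := by
    rintro (_ | m) j
    · rw [hv0, map_zero]
    · rw [hvs, constantCoeff_psSubst, ← coeff_zero_eq_constantCoeff_apply]
      exact hr j 0 (by simp)
  have hargs : ∀ m i, constantCoeff (Sum.elim (fun i => X i) (v m) i) = 0 := by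
    rintro m (i | l)
    exacts [constantCoeff_X i, hconst m l]
  have hagree : ∀ k m, k ≤ m → ∀ j, ((k + 1 : ℕ) : ℕ∞) ≤ (v m j - v k j).order := by
    intro k
    induction k with
    | zero =>
      intro m _ j
      simpa using one_le_order_iff_constCoeff_eq_zero.mpr (by simp [hconst])
    | succ k ih =>
      intro m hm j
      obtain ⟨m, rfl⟩ : ∃ m', m = m' + 1 := ⟨m - 1, by omega⟩
      rw [hvs, hvs, Nat.cast_succ]
      refine le_order_psSubst_sub (hr j) (hargs m) (hargs k) ?_
      rintro (i | l)
      · simp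
      · exact ih m (by omega) l
  intro k e he j m hm
  rw [← sub_eq_zero, ← map_sub]
  exact coeff_of_lt_order ((Nat.cast_lt.mpr (Nat.lt_succ_of_le he)).trans_le (hagree k m hm j))
end

section
/- Let s, t > 0, let σ and τ be finite types, and let f be a formal power series in the variables σ over ℝ such that the family (d ↦ |coeff_d f| · t^{|d|}) is summable with sum M. Let g : σ → (formal power series in the variables τ over ℝ) be a family all of whose members have zero constant term, such that for each i ∈ σ the family (e ↦ |coeff_e (g i)| · s^{|e|}) is summable with sum at most t. Then the family (e ↦ |coeff_e (f(g))| · s^{|e|}) is summable with sum at most M, where f(g) denotes the substitution of the family g into f. -/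
open MvPowerSeries

/-!
Measure a power series by the weighted `ℓ¹` norm `‖h‖_s = ∑ₑ |coeff e h| s^|e|`. This norm is
submultiplicative, so `‖g^d‖_s ≤ ‖g‖_s^d ≤ t^|d|` for every monomial `g^d` in the `g i`. Expanding
`f(g) = ∑_d coeff d f • g^d` and applying the triangle inequality coefficientwise gives
`‖f(g)‖_s ≤ ∑_d |coeff d f| t^|d| = ‖f‖_t`. Working with `ℝ≥0∞`-valued norms makes all the
rearrangements of double series unconditional; summability is recovered at the end from finiteness.
-/

open scoped ENNReal

theorem enorm_mul_le {R : Type*} [NormedRing R] (a b : R) : ‖a * b‖ₑ ≤ ‖a‖ₑ * ‖b‖ₑ := by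
  simpa only [enorm_eq_nnnorm, ← ENNReal.coe_mul] using ENNReal.coe_le_coe.mpr (nnnorm_mul_le a b)

open Finset in
theorem ENNReal.tsum_mul_tsum_eq_tsum_sum_antidiagonal {A : Type*} [AddCommMonoid A]
    [HasAntidiagonal A] (f g : A → ℝ≥0∞) :
    (∑' n, f n) * ∑' n, g n = ∑' n, ∑ kl ∈ antidiagonal n, f kl.1 * g kl.2 :=
  calc (∑' n, f n) * ∑' n, g n = ∑' kl : A × A, f kl.1 * g kl.2 := by
        rw [ENNReal.tsum_prod (f := fun a b => f a * g b), ← ENNReal.tsum_mul_right]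
        simp_rw [← ENNReal.tsum_mul_left]
    _ = ∑' n, ∑ kl ∈ antidiagonal n, f kl.1 * g kl.2 := by
        rw [← HasAntidiagonal.sigmaAntidiagonalEquivProd.tsum_eq, ENNReal.tsum_sigma']
        simp only [tsum_fintype]
        exact tsum_congr fun n => sum_coe_sort (antidiagonal n) (fun kl => f kl.1 * g kl.2)

theorem enorm_sum_mul_le {ι R : Type*} [NormedRing R] (u : Finset ι) (a b : ι → R) :
    ‖∑ i ∈ u, a i * b i‖ₑ ≤ ∑ i ∈ u, ‖a i‖ₑ * ‖b i‖ₑ :=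
  (enorm_sum_le _ _).trans (Finset.sum_le_sum fun i _ => enorm_mul_le (a i) (b i))

section WeightedENorm

variable {τ R : Type*}

noncomputable def weightedENorm [NormedRing R] (s : ℝ≥0∞) (h : MvPowerSeries τ R) : ℝ≥0∞ :=
  ∑' e : τ →₀ ℕ, ‖coeff e h‖ₑ * s ^ (e.sum fun _ n => n)

open Finset in
theorem weightedENorm_mul_le [NormedRing R] (s : ℝ≥0∞) (h₁ h₂ : MvPowerSeries τ R) :
    weightedENorm s (h₁ * h₂) ≤ weightedENorm s h₁ * weightedENorm s h₂ := by
  classical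
  simp only [weightedENorm]
  rw [ENNReal.tsum_mul_tsum_eq_tsum_sum_antidiagonal]
  refine ENNReal.tsum_le_tsum fun e => ?_
  rw [coeff_mul]
  calc ‖∑ p ∈ antidiagonal e, coeff p.1 h₁ * coeff p.2 h₂‖ₑ * s ^ (e.sum fun _ n => n)
      ≤ (∑ p ∈ antidiagonal e, ‖coeff p.1 h₁‖ₑ * ‖coeff p.2 h₂‖ₑ) *
          s ^ (e.sum fun _ n => n) := by
        gcongr
        exact enorm_sum_mul_le _ _ _
    _ = _ := by
        rw [Finset.sum_mul]
        refine Finset.sum_congr rfl fun p hp => ?_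
        rw [← mem_antidiagonal.mp hp,
          Finsupp.sum_add_index' (fun _ => rfl) (fun _ _ _ => rfl), pow_add]
        ring

theorem weightedENorm_one [NormedRing R] [NormOneClass R] (s : ℝ≥0∞) :
    weightedENorm s (1 : MvPowerSeries τ R) = 1 := by
  classical
  rw [weightedENorm, tsum_eq_single 0 fun e he => by simp [coeff_one, he]]
  simp

theorem weightedENorm_pow_le [NormedRing R] [NormOneClass R] (s : ℝ≥0∞)
    (h : MvPowerSeries τ R) (n : ℕ) : weightedENorm s (h ^ n) ≤ weightedENorm s h ^ n := by
  induction n with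
  | zero => simp [weightedENorm_one]
  | succ n ih =>
    rw [pow_succ, pow_succ]
    exact (weightedENorm_mul_le s _ _).trans (mul_le_mul_left ih _)

theorem weightedENorm_finsuppProd_pow_le [NormedCommRing R] [NormOneClass R] {σ : Type*}
    {s t : ℝ≥0∞} (g : σ → MvPowerSeries τ R) (hg : ∀ i, weightedENorm s (g i) ≤ t)
    (d : σ →₀ ℕ) : weightedENorm s (d.prod fun i k => g i ^ k) ≤ t ^ (d.sum fun _ n => n) :=
  calc weightedENorm s (d.prod fun i k => g i ^ k)
      ≤ ∏ i ∈ d.support, weightedENorm s (g i ^ d i) :=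
        Finset.le_prod_of_submultiplicative _ (weightedENorm_one s).le (weightedENorm_mul_le s) _ _
    _ ≤ ∏ i ∈ d.support, t ^ d i := Finset.prod_le_prod' fun i _ =>
        (weightedENorm_pow_le s _ _).trans (pow_le_pow_left' (hg i) _)
    _ = t ^ (d.sum fun _ n => n) := Finset.prod_pow_eq_pow_sum _ _ _

theorem weightedENorm_ofReal {s : ℝ} (hs : 0 ≤ s) (h : MvPowerSeries τ ℝ) :
    weightedENorm (ENNReal.ofReal s) h =
      ∑' e : τ →₀ ℕ, ENNReal.ofReal (|coeff e h| * s ^ (e.sum fun _ n => n)) :=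
  tsum_congr fun e => by
    rw [ENNReal.ofReal_mul (abs_nonneg _), ENNReal.ofReal_pow hs, Real.enorm_eq_ofReal_abs]

theorem weightedENorm_ofReal_eq_ofReal_tsum {s : ℝ} (hs : 0 ≤ s) {h : MvPowerSeries τ ℝ}
    (hh : Summable fun e : τ →₀ ℕ => |coeff e h| * s ^ (e.sum fun _ n => n)) :
    weightedENorm (ENNReal.ofReal s) h =
      ENNReal.ofReal (∑' e : τ →₀ ℕ, |coeff e h| * s ^ (e.sum fun _ n => n)) := by
  rw [weightedENorm_ofReal hs, ENNReal.ofReal_tsum_of_nonneg (fun e => by positivity) hh]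

end WeightedENorm

theorem summable_and_tsum_le_of_tsum_ofReal_le {ι : Type*} {u : ι → ℝ} (hu : ∀ i, 0 ≤ u i)
    {M : ℝ} (hM : 0 ≤ M) (h : ∑' i, ENNReal.ofReal (u i) ≤ ENNReal.ofReal M) :
    Summable u ∧ ∑' i, u i ≤ M := by
  have hu_summable : Summable u := by
    simpa only [ENNReal.toReal_ofReal (hu _)] using
      ENNReal.summable_toReal (ne_top_of_le_ne_top ENNReal.ofReal_ne_top h)
  refine ⟨hu_summable, ?_⟩
  rwa [← ENNReal.ofReal_tsum_of_nonneg hu hu_summable, ENNReal.ofReal_le_ofReal_iff hM] at h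

section Substitution

variable {σ τ : Type*} [Fintype σ]

theorem coeff_psSubst_s6 (f : MvPowerSeries σ ℝ) (g : σ → MvPowerSeries τ ℝ) (e : τ →₀ ℕ) :
    coeff e (psSubst f g) =
      ∑ d ∈ degLE σ (e.sum fun _ n => n), coeff d f * coeff e (d.prod fun i k => g i ^ k) := by
  have h_unfold : coeff e (psSubst f g) =
      coeff e (MvPolynomial.aeval g (truncTotalDeg (e.sum fun _ n => n) f)) := rfl
  rw [h_unfold, truncTotalDeg, map_sum, map_sum]
  refine Finset.sum_congr rfl fun d _ => ?_
  rw [MvPolynomial.aeval_monomial, ← Algebra.smul_def, map_smul, smul_eq_mul]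

theorem enorm_coeff_psSubst_le (f : MvPowerSeries σ ℝ) (g : σ → MvPowerSeries τ ℝ)
    (e : τ →₀ ℕ) :
    ‖coeff e (psSubst f g)‖ₑ ≤ ∑' d, ‖coeff d f‖ₑ * ‖coeff e (d.prod fun i k => g i ^ k)‖ₑ := by
  rw [coeff_psSubst_s6]
  exact (enorm_sum_mul_le _ _ _).trans (ENNReal.sum_le_tsum _)

theorem weightedENorm_psSubst_le {s t : ℝ≥0∞} (f : MvPowerSeries σ ℝ)
    (g : σ → MvPowerSeries τ ℝ) (hg : ∀ i, weightedENorm s (g i) ≤ t) :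
    weightedENorm s (psSubst f g) ≤ weightedENorm t f :=
  calc weightedENorm s (psSubst f g)
      ≤ ∑' e : τ →₀ ℕ, ∑' d : σ →₀ ℕ, ‖coeff d f‖ₑ *
          (‖coeff e (d.prod fun i k => g i ^ k)‖ₑ * s ^ (e.sum fun _ n => n)) :=
        ENNReal.tsum_le_tsum fun e => by
          simp_rw [← mul_assoc, ENNReal.tsum_mul_right]
          gcongr
          exact enorm_coeff_psSubst_le f g e
    _ = ∑' d : σ →₀ ℕ, ‖coeff d f‖ₑ * weightedENorm s (d.prod fun i k => g i ^ k) := by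
        rw [ENNReal.tsum_comm]
        simp_rw [ENNReal.tsum_mul_left]
        rfl
    _ ≤ weightedENorm t f := ENNReal.tsum_le_tsum fun d => by
        gcongr
        exact weightedENorm_finsuppProd_pow_le g hg d

end Substitution

theorem subst_norm_le_general (s t : ℝ) (hs : 0 < s) (ht : 0 < t)
    {σ τ : Type*} [Fintype σ]
    (f : MvPowerSeries σ ℝ) (M : ℝ)
    (hf : HasSum (fun d : σ →₀ ℕ =>
      |MvPowerSeries.coeff d f| * t ^ (d.sum fun _ n => n)) M)
    (g : σ → MvPowerSeries τ ℝ)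
    (hg : ∀ i, Summable (fun e : τ →₀ ℕ =>
        |MvPowerSeries.coeff e (g i)| * s ^ (e.sum fun _ n => n)) ∧
      (∑' e : τ →₀ ℕ,
        |MvPowerSeries.coeff e (g i)| * s ^ (e.sum fun _ n => n)) ≤ t) :
    Summable (fun e : τ →₀ ℕ =>
      |MvPowerSeries.coeff e (psSubst f g)| * s ^ (e.sum fun _ n => n)) ∧
    (∑' e : τ →₀ ℕ,
      |MvPowerSeries.coeff e (psSubst f g)| * s ^ (e.sum fun _ n => n)) ≤ M := by
  have hg_norm : ∀ i, weightedENorm (ENNReal.ofReal s) (g i) ≤ ENNReal.ofReal t := fun i => by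
    rw [weightedENorm_ofReal_eq_ofReal_tsum hs.le (hg i).1]
    exact ENNReal.ofReal_le_ofReal (hg i).2
  have hf_norm : weightedENorm (ENNReal.ofReal t) f = ENNReal.ofReal M := by
    rw [weightedENorm_ofReal_eq_ofReal_tsum ht.le hf.summable, hf.tsum_eq]
  refine summable_and_tsum_le_of_tsum_ofReal_le (fun e => by positivity)
    (hf.nonneg fun d => by positivity) ?_
  rw [← weightedENorm_ofReal hs.le, ← hf_norm]
  exact weightedENorm_psSubst_le f g hg_norm

/-- Composition of convergent power series is convergent: if `‖f‖_t = M` and each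
`g i` has zero constant term with `‖g i‖_s ≤ t`, then `‖f(g)‖_s ≤ M`. -/
theorem subst_norm_le (s t : ℝ) (hs : 0 < s) (ht : 0 < t)
    {σ τ : Type*} [Fintype σ] [Fintype τ]
    (f : MvPowerSeries σ ℝ) (M : ℝ)
    (hf : HasSum (fun d : σ →₀ ℕ =>
      |MvPowerSeries.coeff d f| * t ^ (d.sum fun _ n => n)) M)
    (g : σ → MvPowerSeries τ ℝ)
    (hg0 : ∀ i, MvPowerSeries.constantCoeff (σ := τ) (R := ℝ) (g i) = 0)
    (hg : ∀ i, Summable (fun e : τ →₀ ℕ =>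
        |MvPowerSeries.coeff e (g i)| * s ^ (e.sum fun _ n => n)) ∧
      (∑' e : τ →₀ ℕ,
        |MvPowerSeries.coeff e (g i)| * s ^ (e.sum fun _ n => n)) ≤ t) :
    Summable (fun e : τ →₀ ℕ =>
      |MvPowerSeries.coeff e (psSubst f g)| * s ^ (e.sum fun _ n => n)) ∧
    (∑' e : τ →₀ ℕ,
      |MvPowerSeries.coeff e (psSubst f g)| * s ^ (e.sum fun _ n => n)) ≤ M :=
  subst_norm_le_general s t hs ht f M hf g hg
end
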